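/- arXiv:1207.2171 — 5 statements merged into one kernel-verified Lean document; each statement's English description precedes it below -/
import Mathlib

section
/- (Theorem 6) Let 3 ≤ k ≤ n, let S be a k-element subset of Fin n, and let y be an unordered pair of distinct vertices not contained in S. The restriction of the k-clique function f_{n,k} to the variable set X = {edges within S} ∪ {y} (all other edge variables set to false) is not invariant under all permutations of X: for any edge e within S, the transposition exchanging the variables e and y is not an automorphism of the restricted function; hence the automorphism group of the restricted function is not the full symmetric group on its C(k,2)+1 variables. -/
/-
The indicator of the edges within `S` makes the restricted clique function true, `S` being a
`k`-clique. After exchanging an edge `e` of `S` with `y`, the present edges are those of `S`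
other than `e`, together with `y`. A `k`-clique `T` with `k ≥ 3` cannot contain a vertex outside
`S`: such a vertex has at least two edges in `T`, all outside `S`, while `y` is the only present
edge outside `S`. So `T = S`, but `e` is missing.
-/

/-- An edge on the vertex set `Fin n`: an unordered pair of distinct vertices. -/
abbrev Edge (n : ℕ) := {e : Sym2 (Fin n) // ¬ e.IsDiag}

/-- The `k`-clique Boolean function on edge assignments: `true` iff there is a
`k`-element vertex set all of whose internal edges are present. -/
def cliqueFun (n k : ℕ) (x : Edge n → Bool) : Bool :=
  decide (∃ S : Finset (Fin n), S.card = k ∧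
    ∀ e : Edge n, (e : Sym2 (Fin n)) ∈ S.sym2 → x e = true)

/-- The set of edges with both endpoints in `S`. -/
def edgesIn (n : ℕ) (S : Finset (Fin n)) : Finset (Edge n) :=
  Finset.univ.filter (fun e => (e : Sym2 (Fin n)) ∈ S.sym2)

/-- Restriction of `cliqueFun` to the edge variables in `X`, obtained by setting
all edge variables outside `X` to `false`. -/
def cliqueRestrict (n k : ℕ) (X : Finset (Edge n)) (x : {e : Edge n // e ∈ X} → Bool) : Bool :=
  cliqueFun n k (fun e => if h : e ∈ X then x ⟨e, h⟩ else false)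

/-- The permutation of edges induced by a relabeling of the vertices,
sending the edge `{i, j}` to `{σ i, σ j}`. -/
def edgePerm {n : ℕ} (σ : Equiv.Perm (Fin n)) : Equiv.Perm (Edge n) where
  toFun e := ⟨Sym2.map σ e.1, fun h => e.2 ((Sym2.isDiag_map σ.injective).mp h)⟩
  invFun e := ⟨Sym2.map σ.symm e.1, fun h => e.2 ((Sym2.isDiag_map σ.symm.injective).mp h)⟩
  left_inv e := Subtype.ext (by simp [Sym2.map_map])
  right_inv e := Subtype.ext (by simp [Sym2.map_map])

theorem mem_edgesIn {n : ℕ} {S : Finset (Fin n)} {a : Edge n} :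
    a ∈ edgesIn n S ↔ (a : Sym2 (Fin n)) ∈ S.sym2 := by
  simp [edgesIn]

theorem edgesIn_nonempty {n : ℕ} {S : Finset (Fin n)} (hS : 1 < S.card) :
    (edgesIn n S).Nonempty := by
  obtain ⟨i, hi, j, hj, hij⟩ := Finset.one_lt_card.mp hS
  exact ⟨⟨s(i, j), by simpa using hij⟩, mem_edgesIn.mpr (Finset.mk_mem_sym2_iff.mpr ⟨hi, hj⟩)⟩

theorem subset_of_edgesIn_subset_insert {n : ℕ} {S T : Finset (Fin n)} {y : Edge n}
    (hT : 3 ≤ T.card) (hTS : edgesIn n T ⊆ insert y (edgesIn n S)) : T ⊆ S := by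
  intro v hvT
  by_contra hvS
  have edge_eq_y : ∀ z ∈ T.erase v, s(v, z) = y.1 := by
    intro z hz
    obtain ⟨hzv, hzT⟩ := Finset.mem_erase.mp hz
    have hvz : (⟨s(v, z), by simpa using hzv.symm⟩ : Edge n) ∈ insert y (edgesIn n S) :=
      hTS (mem_edgesIn.mpr (Finset.mk_mem_sym2_iff.mpr ⟨hvT, hzT⟩))
    rcases Finset.mem_insert.mp hvz with h | h
    · exact congrArg Subtype.val h
    · exact absurd (Finset.mk_mem_sym2_iff.mp (mem_edgesIn.mp h)).1 hvS
  have hcard : 1 < (T.erase v).card := by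
    rw [Finset.card_erase_of_mem hvT]; omega
  obtain ⟨u, hu, w, hw, huw⟩ := Finset.one_lt_card.mp hcard
  exact huw (Sym2.congr_right.mp ((edge_eq_y u hu).trans (edge_eq_y w hw).symm))

theorem cliqueFun_eq_true_of_forall_edgesIn {n k : ℕ} {S : Finset (Fin n)} (hS : S.card = k)
    {x : Edge n → Bool} (hx : ∀ a ∈ edgesIn n S, x a = true) : cliqueFun n k x = true :=
  decide_eq_true ⟨S, hS, fun a ha => hx a (mem_edgesIn.mpr ha)⟩

theorem cliqueFun_eq_false_of_subset_insert {n k : ℕ} (hk : 3 ≤ k) {S : Finset (Fin n)}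
    (hS : S.card = k) {y e : Edge n} (he : e ∈ edgesIn n S) {x : Edge n → Bool}
    (hxe : x e = false) (hx : ∀ a, x a = true → a ∈ insert y (edgesIn n S)) :
    cliqueFun n k x = false := by
  refine decide_eq_false fun ⟨T, hT, hclique⟩ => ?_
  have hTS : T ⊆ S :=
    subset_of_edgesIn_subset_insert (hT ▸ hk) fun a ha => hx a (hclique a (mem_edgesIn.mp ha))
  have hTeq : T = S := Finset.eq_of_subset_of_card_le hTS (by rw [hS, hT])
  have hxe' := hclique e (hTeq ▸ mem_edgesIn.mp he)
  rw [hxe] at hxe'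
  exact Bool.false_ne_true hxe'

theorem cliqueRestrict_not_invariant_swap {n k : ℕ} (hk : 3 ≤ k) {S : Finset (Fin n)}
    (hS : S.card = k) {y e : Edge n} (hy : y ∉ edgesIn n S) (he : e ∈ edgesIn n S) :
    ¬ ∀ x : {a // a ∈ insert y (edgesIn n S)} → Bool,
      cliqueRestrict n k _ (x ∘ Equiv.swap ⟨e, Finset.mem_insert_of_mem he⟩
        ⟨y, Finset.mem_insert_self y _⟩) = cliqueRestrict n k _ x := by
  intro hall
  set X := insert y (edgesIn n S)
  set x : {a // a ∈ X} → Bool := fun a => decide (a.1 ∈ edgesIn n S)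
  have hx : cliqueRestrict n k X x = true :=
    cliqueFun_eq_true_of_forall_edgesIn hS fun a ha => by
      rw [dif_pos (Finset.mem_insert_of_mem ha)]
      exact decide_eq_true ha
  have hswap : cliqueRestrict n k X (x ∘ Equiv.swap ⟨e, Finset.mem_insert_of_mem he⟩
      ⟨y, Finset.mem_insert_self y _⟩) = false := by
    refine cliqueFun_eq_false_of_subset_insert hk hS (y := y) he ?_ fun a ha => ?_
    · rw [dif_pos (Finset.mem_insert_of_mem he)]
      simpa only [Function.comp_apply, Equiv.swap_apply_left, x, decide_eq_false_iff_not] using hy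
    · by_contra haX
      rw [dif_neg haX] at ha
      exact Bool.false_ne_true ha
  rw [hall x, hx] at hswap
  exact Bool.false_ne_true hswap.symm

theorem cliqueRestrict_with_extra_edge_not_fully_symmetric_general (n k : ℕ)
    (hk : 3 ≤ k) (S : Finset (Fin n)) (hS : S.card = k)
    (y : Edge n) (hy : y ∉ edgesIn n S) :
    (∀ e : Edge n, (he : e ∈ edgesIn n S) →
      ¬ (∀ x : {a : Edge n // a ∈ insert y (edgesIn n S)} → Bool,
          cliqueRestrict n k (insert y (edgesIn n S))
            (x ∘ Equiv.swap ⟨e, Finset.mem_insert_of_mem he⟩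
                            ⟨y, Finset.mem_insert_self y (edgesIn n S)⟩) =
          cliqueRestrict n k (insert y (edgesIn n S)) x)) ∧
    ¬ (∀ π : Equiv.Perm {a : Edge n // a ∈ insert y (edgesIn n S)},
        ∀ x : {a : Edge n // a ∈ insert y (edgesIn n S)} → Bool,
          cliqueRestrict n k (insert y (edgesIn n S)) (x ∘ π) =
          cliqueRestrict n k (insert y (edgesIn n S)) x) := by
  refine ⟨fun e he => cliqueRestrict_not_invariant_swap hk hS hy he, fun hall => ?_⟩
  obtain ⟨e, he⟩ := edgesIn_nonempty (S := S) (by omega)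
  exact cliqueRestrict_not_invariant_swap hk hS hy he (hall _)

/-- Theorem 6: for `3 ≤ k ≤ n`, a `k`-element vertex set `S` and an
edge `y` not contained in `S`, the restriction of the `k`-clique function to
`X = {edges within S} ∪ {y}` is not invariant under all permutations of `X`:
for any edge `e` within `S` the transposition exchanging `e` and `y` is not an
automorphism, hence the automorphism group of the restricted function is not
the full symmetric group on its `C(k,2) + 1` variables. -/
theorem cliqueRestrict_with_extra_edge_not_fully_symmetric (n k : ℕ)
    (hk : 3 ≤ k) (hkn : k ≤ n) (S : Finset (Fin n)) (hS : S.card = k)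
    (y : Edge n) (hy : y ∉ edgesIn n S) :
    (∀ e : Edge n, (he : e ∈ edgesIn n S) →
      ¬ (∀ x : {a : Edge n // a ∈ insert y (edgesIn n S)} → Bool,
          cliqueRestrict n k (insert y (edgesIn n S))
            (x ∘ Equiv.swap ⟨e, Finset.mem_insert_of_mem he⟩
                            ⟨y, Finset.mem_insert_self y (edgesIn n S)⟩) =
          cliqueRestrict n k (insert y (edgesIn n S)) x)) ∧
    ¬ (∀ π : Equiv.Perm {a : Edge n // a ∈ insert y (edgesIn n S)},
        ∀ x : {a : Edge n // a ∈ insert y (edgesIn n S)} → Bool,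
          cliqueRestrict n k (insert y (edgesIn n S)) (x ∘ π) =
          cliqueRestrict n k (insert y (edgesIn n S)) x) :=
  cliqueRestrict_with_extra_edge_not_fully_symmetric_general n k hk S hS y hy
end

section
/- (Theorem 7(A)) Let 2 ≤ k and let P and N be disjoint finite sets of edges (unordered pairs of distinct elements of Fin n). If the term T_{P,N} is an implicant of the k-clique function f_{n,k}, then the term involves at least C(k,2) = k(k−1)/2 variables, i.e., the cardinality of P ∪ N is at least k(k−1)/2. -/
/-!
Setting exactly the edges of `P` to `true` satisfies the term, since `P` and `N` are disjoint.
Hence this graph contains a `k`-clique, and all `C(k,2)` edges of that clique lie in `P`.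
-/

open Finset

theorem map_subtype_edgesIn {n : ℕ} (S : Finset (Fin n)) :
    (edgesIn n S).map (Function.Embedding.subtype _) = S.offDiag.image Sym2.mk.uncurry := by
  ext z
  induction z using Sym2.ind with
  | h a b =>
    simp only [edgesIn, mem_map, mem_filter, mem_univ, true_and, mem_image, mem_offDiag]
    aesop

theorem card_edgesIn {n : ℕ} (S : Finset (Fin n)) : #(edgesIn n S) = (#S).choose 2 := by
  rw [← Sym2.card_image_offDiag, ← map_subtype_edgesIn, card_map]

theorem exists_edgesIn_of_cliqueFun_eq_true {n k : ℕ} {x : Edge n → Bool}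
    (h : cliqueFun n k x = true) : ∃ S : Finset (Fin n), #S = k ∧ ∀ e ∈ edgesIn n S, x e = true := by
  obtain ⟨S, hcard, hS⟩ := of_decide_eq_true h
  exact ⟨S, hcard, fun e he => hS e (mem_filter.mp he).2⟩

theorem implicant_card_lower_bound_general (n k : ℕ)
    (P N : Finset (Edge n)) (hPN : Disjoint P N)
    (himp : ∀ x : Edge n → Bool,
      ((∀ e ∈ P, x e = true) ∧ (∀ e ∈ N, x e = false)) → cliqueFun n k x = true) :
    k * (k - 1) / 2 ≤ (P ∪ N).card := by
  have hx : cliqueFun n k (fun e => decide (e ∈ P)) = true :=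
    himp _ ⟨fun e he => decide_eq_true he,
      fun e he => decide_eq_false (disjoint_right.mp hPN he)⟩
  obtain ⟨S, hcard, hS⟩ := exists_edgesIn_of_cliqueFun_eq_true hx
  have hSP : edgesIn n S ⊆ P := fun e he => of_decide_eq_true (hS e he)
  calc k * (k - 1) / 2 = #(edgesIn n S) := by rw [card_edgesIn, hcard, Nat.choose_two_right]
    _ ≤ #P := card_le_card hSP
    _ ≤ #(P ∪ N) := card_le_card subset_union_left

/-- Theorem 7(A): any implicant term `T_{P,N}` of the `k`-clique
function (for `2 ≤ k`) involves at least `C(k,2) = k(k-1)/2` variables. -/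
theorem implicant_card_lower_bound (n k : ℕ) (hk : 2 ≤ k)
    (P N : Finset (Edge n)) (hPN : Disjoint P N)
    (himp : ∀ x : Edge n → Bool,
      ((∀ e ∈ P, x e = true) ∧ (∀ e ∈ N, x e = false)) → cliqueFun n k x = true) :
    k * (k - 1) / 2 ≤ (P ∪ N).card :=
  implicant_card_lower_bound_general n k P N hPN himp
end

section
/- (Theorem 8) Let P and N be disjoint finite sets of edges (unordered pairs of distinct elements of Fin n). If the term T_{P,N} is an implicant of the k-clique function f_{n,k}, then there exists a k-element subset S of Fin n such that every edge within S belongs to P ∪ N; that is, the term must contain all C(k,2) variables representing the edges among some k vertices. -/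
/-- Theorem 8: any implicant term `T_{P,N}` of the `k`-clique
function must contain all `C(k,2)` variables representing the edges among some
`k` vertices. -/
theorem implicant_contains_clique_edges (n k : ℕ)
    (P N : Finset (Edge n)) (hPN : Disjoint P N)
    (himp : ∀ x : Edge n → Bool,
      ((∀ e ∈ P, x e = true) ∧ (∀ e ∈ N, x e = false)) → cliqueFun n k x = true) :
    ∃ S : Finset (Fin n), S.card = k ∧
      ∀ e : Edge n, (e : Sym2 (Fin n)) ∈ S.sym2 → e ∈ P ∪ N := by
  have h := himp (fun e => decide (e ∈ P)) ⟨fun e he => by simp [he],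
    fun e he => by simp [Finset.disjoint_right.mp hPN he]⟩
  rw [cliqueFun, decide_eq_true_iff] at h
  obtain ⟨S, hS, hall⟩ := h
  refine ⟨S, hS, fun e he => ?_⟩
  have := hall e he
  simp only [decide_eq_true_iff] at this
  exact Finset.mem_union_left _ this
end

section
/- (Theorem 9) Let P and N be disjoint finite sets of edges (unordered pairs of distinct elements of Fin n). If the term T_{P,N} is an implicant of the k-clique function f_{n,k}, then there exists a k-element subset S of Fin n such that every edge within S belongs to P; that is, the term must contain all C(k,2) edge variables of some k-clique occurring positively (without negations). -/
/-- Theorem 9: any implicant term `T_{P,N}` of the `k`-clique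
function must contain all `C(k,2)` edge variables of some `k`-clique occurring
positively (without negations). -/
theorem implicant_contains_clique_edges_positively (n k : ℕ)
    (P N : Finset (Edge n)) (hPN : Disjoint P N)
    (himp : ∀ x : Edge n → Bool,
      ((∀ e ∈ P, x e = true) ∧ (∀ e ∈ N, x e = false)) → cliqueFun n k x = true) :
    ∃ S : Finset (Fin n), S.card = k ∧
      ∀ e : Edge n, (e : Sym2 (Fin n)) ∈ S.sym2 → e ∈ P := by
  have h := himp (fun e => decide (e ∈ P)) ⟨fun e he => by simp [he],
    fun e he => by simp [Finset.disjoint_right.mp hPN he]⟩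
  simp only [cliqueFun, decide_eq_true_eq] at h
  obtain ⟨S, hS, hall⟩ := h
  exact ⟨S, hS, fun e he => by simpa using hall e he⟩
end

section
/- (Core of Theorem 10, DNF lower bound) Let 2 ≤ k ≤ n and suppose the k-clique function f_{n,k} is written in disjunctive normal form: there is a family of terms T_{P_j,N_j}, indexed by j ∈ J, with each P_j, N_j disjoint, such that for every edge assignment x, f_{n,k}(x) = true iff x satisfies T_{P_j,N_j} for some j ∈ J. Then there is an injective map from the k-element subsets of Fin n into J; in particular, if J is finite then the disjunctive normal form has at least C(n,k) = n!/(k!(n−k)!) clauses. -/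
/-!
Choose for every `k`-set `S` a term satisfied by the graph that is exactly the clique on `S`.
Terms are closed under pointwise conjunction of assignments, and the conjunction of the cliques
on `S` and `S'` is the clique on `S ∩ S'`. So if `S` and `S'` received the same term, the clique
on `S ∩ S'` contains a `k`-clique; since `k ≥ 2`, the vertices of that `k`-clique are covered by
its edges, hence lie in `S ∩ S'`, which forces `S = S'`.
-/

open Finset

def cliqueAssignment {n : ℕ} (S : Finset (Fin n)) (e : Edge n) : Bool :=
  decide ((e : Sym2 (Fin n)) ∈ S.sym2)

def Satisfies {E : Type*} (P N : Finset E) (x : E → Bool) : Prop :=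
  (∀ e ∈ P, x e = true) ∧ (∀ e ∈ N, x e = false)

theorem Satisfies.and {E : Type*} {P N : Finset E} {x y : E → Bool}
    (hx : Satisfies P N x) (hy : Satisfies P N y) : Satisfies P N (fun e => x e && y e) :=
  ⟨fun e he => by simp [hx.1 e he, hy.1 e he], fun e he => by simp [hx.2 e he]⟩

theorem Finset.subset_of_offDiag_sym2_subset {α : Type*} {C T : Finset α} (hC : 1 < #C)
    (h : ∀ e ∈ C.sym2, ¬ e.IsDiag → e ∈ T.sym2) : C ⊆ T := by
  intro a ha
  obtain ⟨b, hb, hba⟩ := C.exists_mem_ne hC a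
  have hab : s(a, b) ∈ T.sym2 :=
    h _ (mk_mem_sym2_iff.mpr ⟨ha, hb⟩) (by simpa using hba.symm)
  exact (mk_mem_sym2_iff.mp hab).1

theorem cliqueAssignment_inter {n : ℕ} (S T : Finset (Fin n)) :
    cliqueAssignment (S ∩ T) = fun e => cliqueAssignment S e && cliqueAssignment T e := by
  funext e
  simp only [cliqueAssignment, mem_sym2_iff, mem_inter, imp_and, forall_and, Bool.decide_and]

theorem cliqueFun_cliqueAssignment {n k : ℕ} {S : Finset (Fin n)} (hS : #S = k) :
    cliqueFun n k (cliqueAssignment S) = true :=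
  decide_eq_true ⟨S, hS, fun _ he => decide_eq_true he⟩

theorem le_card_of_cliqueFun_cliqueAssignment {n k : ℕ} (hk : 2 ≤ k) {T : Finset (Fin n)}
    (h : cliqueFun n k (cliqueAssignment T) = true) : k ≤ #T := by
  obtain ⟨C, hC, hCT⟩ := of_decide_eq_true h
  refine hC ▸ card_le_card (subset_of_offDiag_sym2_subset (by omega) fun e he hdiag => ?_)
  exact of_decide_eq_true (hCT ⟨e, hdiag⟩ he)

theorem dnf_clique_lower_bound_general (n k : ℕ) (hk : 2 ≤ k)
    {J : Type*} (P N : J → Finset (Edge n))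
    (hdnf : ∀ x : Edge n → Bool,
      cliqueFun n k x = true ↔
        ∃ j : J, (∀ e ∈ P j, x e = true) ∧ (∀ e ∈ N j, x e = false)) :
    (∃ F : {S : Finset (Fin n) // S.card = k} → J, Function.Injective F) ∧
    (Finite J → Nat.choose n k ≤ Nat.card J) := by
  choose F hF using fun S : {S : Finset (Fin n) // #S = k} =>
    (hdnf _).mp (cliqueFun_cliqueAssignment S.2)
  have hF_inj : Function.Injective F := by
    rintro ⟨S, hS⟩ ⟨S', hS'⟩ hSS'
    have hsat : Satisfies (P (F ⟨S, hS⟩)) (N (F ⟨S, hS⟩)) (cliqueAssignment (S ∩ S')) := by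
      rw [cliqueAssignment_inter]
      exact Satisfies.and (hF ⟨S, hS⟩) (hSS' ▸ hF ⟨S', hS'⟩)
    have hcard := le_card_of_cliqueFun_cliqueAssignment hk ((hdnf _).mpr ⟨_, hsat⟩)
    ext1
    exact (eq_of_subset_of_card_le inter_subset_left (hS ▸ hcard)).symm.trans
      (eq_of_subset_of_card_le inter_subset_right (hS' ▸ hcard))
  refine ⟨⟨F, hF_inj⟩, fun _ => ?_⟩
  simpa using Nat.card_le_card_of_injective F hF_inj

/-- core of Theorem 10: any disjunctive normal form of the
`k`-clique function (`2 ≤ k ≤ n`) admits an injective map from the `k`-element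
subsets of `Fin n` into its index set; in particular a finite DNF has at least
`C(n,k)` clauses. -/
theorem dnf_clique_lower_bound (n k : ℕ) (hk : 2 ≤ k) (hkn : k ≤ n)
    {J : Type*} (P N : J → Finset (Edge n)) (hPN : ∀ j, Disjoint (P j) (N j))
    (hdnf : ∀ x : Edge n → Bool,
      cliqueFun n k x = true ↔
        ∃ j : J, (∀ e ∈ P j, x e = true) ∧ (∀ e ∈ N j, x e = false)) :
    (∃ F : {S : Finset (Fin n) // S.card = k} → J, Function.Injective F) ∧
    (Finite J → Nat.choose n k ≤ Nat.card J) :=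
  dnf_clique_lower_bound_general n k hk P N hdnf
end
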